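/- arXiv:q-alg/9704017 — 3 statements merged into one kernel-verified Lean document; each statement's English description precedes it below -/
import Mathlib

section
/- Let $d_n = (2! \cdot 3! \cdots n!)^4 \cdot (n+1)!$ (with $d_0 = 1$). Then for all positive integers $p$ and $q$, the number $(p+q)! \cdot d_p \cdot d_q$ divides $d_{p+q}$. -/
/-- `d n = (2! ⋯ n!)^4 * (n+1)!` -/
def d (n : ℕ) : ℕ := (∏ k ∈ Finset.Icc 2 n, Nat.factorial k) ^ 4 * Nat.factorial (n + 1)

lemma d_succ (n : ℕ) :
    d (n + 1) = d n * (Nat.factorial (n + 1)) ^ 3 * Nat.factorial (n + 2) := by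
  rcases n with _ | m
  · decide
  · unfold d
    rw [Finset.prod_Icc_succ_top (by omega : 2 ≤ m + 1 + 1)]
    ring

theorem factorial_d_mul_d_dvd (p q : ℕ) (hp : 0 < p) (hq : 0 < q) :
    Nat.factorial (p + q) * d p * d q ∣ d (p + q) := by
  induction q with
  | zero => omega
  | succ n ih =>
    rcases Nat.eq_zero_or_pos n with rfl | hn
    · -- base case q = 1
      have hd1 : d 1 = 2 := by decide
      rw [hd1, d_succ p]
      have h2 : 2 ∣ Nat.factorial (p + 2) :=
        Nat.dvd_factorial (by omega) (by omega)
      obtain ⟨c, hc⟩ := h2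
      refine ⟨(Nat.factorial (p + 1)) ^ 2 * c, ?_⟩
      rw [hc]; ring
    · have ih' := ih hn
      obtain ⟨k, hk⟩ := ih'
      have hrw : p + (n + 1) = (p + n) + 1 := by omega
      rw [hrw, d_succ (p + n), d_succ n, hk]
      have h1 : Nat.factorial (n + 1) ∣ Nat.factorial (p + n) :=
        Nat.factorial_dvd_factorial (by omega)
      have h2 : (Nat.factorial (n + 1)) ^ 2 ∣ (Nat.factorial (p + n + 1)) ^ 2 :=
        pow_dvd_pow_of_dvd (Nat.factorial_dvd_factorial (by omega)) 2
      have h3 : Nat.factorial (n + 2) ∣ Nat.factorial (p + n + 2) :=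
        Nat.factorial_dvd_factorial (by omega)
      have key : Nat.factorial (n + 1) * (Nat.factorial (n + 1)) ^ 2 *
            Nat.factorial (n + 2) ∣
          Nat.factorial (p + n) * (Nat.factorial (p + n + 1)) ^ 2 *
            Nat.factorial (p + n + 2) :=
        mul_dvd_mul (mul_dvd_mul h1 h2) h3
      obtain ⟨m, hm⟩ := key
      refine ⟨k * m, ?_⟩
      calc Nat.factorial (p + n) * d p * d n * k *
            Nat.factorial (p + n + 1) ^ 3 * Nat.factorial (p + n + 2)
          = (Nat.factorial (p + n) * Nat.factorial (p + n + 1) ^ 2 *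
              Nat.factorial (p + n + 2)) *
              (d p * d n * k * Nat.factorial (p + n + 1)) := by ring
        _ = (Nat.factorial (n + 1) * Nat.factorial (n + 1) ^ 2 *
              Nat.factorial (n + 2) * m) *
              (d p * d n * k * Nat.factorial (p + n + 1)) := by rw [hm]
        _ = Nat.factorial (p + n + 1) * d p *
              (d n * Nat.factorial (n + 1) ^ 3 * Nat.factorial (n + 2)) *
              (k * m) := by ring
end

section
/- Suppose a graded $\mathbb{Q}$-algebra $A$ has a $\mathbb{Z}$-submodule (integral lattice) $L$, closed under multiplication, with $A = L \otimes \mathbb{Q}$, and elements $x_k \in A$ for $k \geq 2$ such that $d_k \cdot x_k \in L$ for all $k$, where $d_k = (2! \cdots k!)^4(k+1)!$. Then for any $k \geq 1$ and indices $n_1, \ldots, n_k \geq 2$ with $n_1 + \cdots + n_k = n$, the element $\frac{1}{k!} x_{n_1} \cdots x_{n_k}$ satisfies $d_n \cdot \frac{1}{k!} x_{n_1} \cdots x_{n_k} \in L$. -/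
private def sf (n : ℕ) : ℕ := ∏ k ∈ Finset.Icc 2 n, Nat.factorial k

private lemma d_eq (n : ℕ) : d n = sf n ^ 4 * Nat.factorial (n + 1) := rfl

private lemma sf_succ (n : ℕ) (hn : 1 ≤ n) :
    sf (n + 1) = sf n * Nat.factorial (n + 1) := by
  unfold sf
  rw [← Finset.prod_Icc_succ_top (by omega : 2 ≤ n + 1)]

private lemma sf_dvd (a b : ℕ) (ha : 1 ≤ a) (hb : 1 ≤ b) :
    sf a * sf b * Nat.factorial (a + b) ∣ sf (a + b) := by
  induction b, hb using Nat.le_induction with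
  | base =>
    have h1 : sf 1 = 1 := by unfold sf; simp
    rw [sf_succ a ha, h1, mul_one]
  | succ b hb ih =>
    have h1 : sf (a + (b + 1)) = sf (a + b) * Nat.factorial (a + b + 1) := by
      rw [show a + (b + 1) = (a + b) + 1 by ring, sf_succ (a + b) (by omega)]
    rw [h1, sf_succ b hb]
    have h2 : sf a * (sf b * Nat.factorial (b + 1)) ∣ sf (a + b) := by
      calc sf a * (sf b * Nat.factorial (b + 1))
          ∣ sf a * sf b * Nat.factorial (a + b) := by
            rw [mul_assoc]
            exact mul_dvd_mul_left _ (mul_dvd_mul_left _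
              (Nat.factorial_dvd_factorial (by omega)))
        _ ∣ sf (a + b) := ih
    exact mul_dvd_mul_right h2 _

private lemma key (m a b : ℕ) (hm0 : 1 ≤ m) (hm : m ≤ a + b) (ha : 1 ≤ a) (hb : 1 ≤ b) :
    m * (d a * d b) ∣ d (a + b) := by
  obtain ⟨R, hR⟩ := sf_dvd a b ha hb
  have h1 : m * (d a * d b) =
      (sf a ^ 4 * sf b ^ 4) * (m * (Nat.factorial (a + 1) * Nat.factorial (b + 1))) := by
    rw [d_eq, d_eq]; ring
  have h2 : m * (Nat.factorial (a + 1) * Nat.factorial (b + 1)) ∣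
      Nat.factorial (a + b + 1) * (Nat.factorial (a + b) * Nat.factorial (a + b)) :=
    mul_dvd_mul (Nat.dvd_factorial hm0 (by omega))
      (mul_dvd_mul (Nat.factorial_dvd_factorial (by omega))
        (Nat.factorial_dvd_factorial (by omega)))
  have h3 : d (a + b) = (sf a ^ 4 * sf b ^ 4) *
      (Nat.factorial (a + b + 1) * (Nat.factorial (a + b) * Nat.factorial (a + b))) *
      (Nat.factorial (a + b) ^ 2 * R ^ 4) := by
    rw [d_eq, hR]; ring
  calc m * (d a * d b)
      ∣ (sf a ^ 4 * sf b ^ 4) *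
        (Nat.factorial (a + b + 1) * (Nat.factorial (a + b) * Nat.factorial (a + b))) := by
        rw [h1]; exact mul_dvd_mul_left _ h2
    _ ∣ d (a + b) := by rw [h3]; exact dvd_mul_right _ _

private lemma dvd_list (l : List ℕ) (h : ∀ i ∈ l, 1 ≤ i) (hne : l ≠ []) :
    Nat.factorial l.length * (l.map d).prod ∣ d l.sum := by
  induction l with
  | nil => exact absurd rfl hne
  | cons a t ih =>
    rcases eq_or_ne t [] with rfl | ht
    · simp [Nat.factorial]
    · have ha : 1 ≤ a := h a (by simp)
      have ht1 : ∀ i ∈ t, 1 ≤ i := fun i hi => h i (by simp [hi])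
      have hts : t.length ≤ t.sum := List.length_le_sum_of_one_le t ht1
      have htl : 1 ≤ t.length := by
        cases t with
        | nil => exact absurd rfl ht
        | cons b s => simp
      have ihd := ih ht1 ht
      have hk := key (t.length + 1) a t.sum (by omega) (by omega) ha (by omega)
      have goal_eq : Nat.factorial (a :: t).length * ((a :: t).map d).prod =
          (t.length + 1) * (d a * (Nat.factorial t.length * (t.map d).prod)) := by
        simp [Nat.factorial_succ]; ring
      have hsum : (a :: t).sum = a + t.sum := by simp
      rw [hsum, goal_eq]
      calc (t.length + 1) * (d a * (Nat.factorial t.length * (t.map d).prod))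
          ∣ (t.length + 1) * (d a * d t.sum) :=
            mul_dvd_mul_left _ (mul_dvd_mul_left _ ihd)
        _ ∣ d (a + t.sum) := hk

theorem denominator_of_product
    (A : Type*) [Ring A] [Algebra ℚ A] (L : Subring A)
    -- `L` is an integral lattice: `A = L ⊗ ℚ`
    (hlat : ∀ a : A, ∃ m : ℕ, 0 < m ∧ (m : ℚ) • a ∈ L)
    (x : ℕ → A) (hx : ∀ k, 2 ≤ k → (d k : ℚ) • x k ∈ L)
    (l : List ℕ) (hl : ∀ i ∈ l, 2 ≤ i) (hne : 1 ≤ l.length)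
    (n : ℕ) (hn : l.sum = n) :
    (d n : ℚ) • ((Nat.factorial l.length : ℚ)⁻¹ • (l.map x).prod) ∈ L := by
  have hmem : ∀ t : List ℕ, (∀ i ∈ t, 2 ≤ i) →
      (((t.map d).prod : ℕ) : ℚ) • (t.map x).prod ∈ L := by
    intro t
    induction t with
    | nil => intro _; simpa using L.one_mem
    | cons a s ih =>
      intro h2
      have := hx a (h2 a (by simp))
      have hs := ih (fun i hi => h2 i (by simp [hi]))
      have heq : (((((a :: s).map d).prod : ℕ)) : ℚ) • ((a :: s).map x).prod =
          ((d a : ℚ) • x a) * ((((s.map d).prod : ℕ) : ℚ) • (s.map x).prod) := by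
        rw [smul_mul_smul_comm]
        push_cast
        simp
      rw [heq]
      exact L.mul_mem this hs
  have hnil : l ≠ [] := by
    cases l with
    | nil => simp at hne
    | cons a t => simp
  obtain ⟨q, hq⟩ := dvd_list l (fun i hi => by have := hl i hi; omega) hnil
  rw [hn] at hq
  have hfact : (Nat.factorial l.length : ℚ) ≠ 0 := by
    exact_mod_cast Nat.factorial_pos l.length |>.ne'
  have heq : (d n : ℚ) • ((Nat.factorial l.length : ℚ)⁻¹ • (l.map x).prod) =
      (q : ℚ) • ((((l.map d).prod : ℕ) : ℚ) • (l.map x).prod) := by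
    rw [smul_smul, smul_smul, hq]
    push_cast
    congr 1
    field_simp
  rw [heq, Nat.cast_smul_eq_nsmul]
  exact nsmul_mem (hmem l hl) q
end

section
/- For $m \geq 2$ and $k$ with $4 \leq k \leq 2m+1$, the number $2^{k-1} (k!)^2 \cdot d_{2m+3-k}$ divides $((2m+2)!)^2 \cdot d_{2m}$, where $d_n = (2!\cdots n!)^4 (n+1)!$. -/
lemma d_mono (a b : ℕ) (h : a ≤ b) : d a ∣ d b := by
  induction b with
  | zero => simp_all
  | succ n ih =>
    rcases Nat.lt_or_ge a (n + 1) with h' | h'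
    · exact (ih (by omega)).trans (by rw [d_succ]; exact (dvd_mul_right _ _).mul_right _)
    · have : a = n + 1 := by omega
      subst this; exact dvd_rfl

lemma two_pow_dvd_fact (m : ℕ) : 2 ^ m ∣ Nat.factorial (2 * m) := by
  induction m with
  | zero => simp
  | succ n ih =>
    have : 2 * (n + 1) = 2 * n + 1 + 1 := by ring
    rw [this, Nat.factorial_succ, Nat.factorial_succ, pow_succ]
    have h2 : (2 : ℕ) ∣ 2 * n + 1 + 1 := ⟨n + 1, by ring⟩
    obtain ⟨c, hc⟩ := h2
    calc 2 ^ n * 2 ∣ Nat.factorial (2 * n) * 2 := mul_dvd_mul_right ih 2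
    _ ∣ (2 * n + 1 + 1) * ((2 * n + 1) * Nat.factorial (2 * n)) := by
        rw [hc]; exact ⟨c * (2 * n + 1), by ring⟩

theorem middle_case_estimate (m k : ℕ) (hm : 2 ≤ m) (hk : 4 ≤ k) (hk' : k ≤ 2 * m + 1) :
    2 ^ (k - 1) * Nat.factorial k ^ 2 * d (2 * m + 3 - k) ∣
      Nat.factorial (2 * m + 2) ^ 2 * d (2 * m) := by
  have h1 : (2 : ℕ) ^ (k - 1) ∣ 2 ^ (2 * m) := pow_dvd_pow 2 (by omega)
  have h2 : Nat.factorial k ^ 2 ∣ Nat.factorial (2 * m + 1) ^ 2 :=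
    pow_dvd_pow_of_dvd (Nat.factorial_dvd_factorial (by omega)) 2
  have h3 : d (2 * m + 3 - k) ∣ d (2 * m - 1) := d_mono _ _ (by omega)
  have step1 : 2 ^ (k - 1) * Nat.factorial k ^ 2 * d (2 * m + 3 - k) ∣
      2 ^ (2 * m) * Nat.factorial (2 * m + 1) ^ 2 * d (2 * m - 1) :=
    mul_dvd_mul (mul_dvd_mul h1 h2) h3
  refine step1.trans ?_
  have hd : d (2 * m) = d (2 * m - 1) * (Nat.factorial (2 * m)) ^ 3 * Nat.factorial (2 * m + 1) := by
    have : 2 * m = (2 * m - 1) + 1 := by omega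
    rw [this, d_succ]
    congr 2
  rw [hd]
  have h4 : 2 ^ (2 * m) ∣ Nat.factorial (2 * m) ^ 2 := by
    have := two_pow_dvd_fact m
    calc 2 ^ (2 * m) = (2 ^ m) ^ 2 := by rw [← pow_mul, Nat.mul_comm]
    _ ∣ Nat.factorial (2 * m) ^ 2 := pow_dvd_pow_of_dvd this 2
  have h5 : Nat.factorial (2 * m + 1) ^ 2 ∣ Nat.factorial (2 * m + 2) ^ 2 :=
    pow_dvd_pow_of_dvd (Nat.factorial_dvd_factorial (by omega)) 2
  obtain ⟨a, ha⟩ := h4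
  obtain ⟨b, hb⟩ := h5
  refine ⟨a * b * Nat.factorial (2 * m) * Nat.factorial (2 * m + 1), ?_⟩
  rw [hb]
  have : Nat.factorial (2 * m) ^ 3 = Nat.factorial (2 * m) ^ 2 * Nat.factorial (2 * m) := by ring
  rw [this, ha]
  ring
end
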